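/- Let a : ℕ → ℝ be a sequence with a_n > 0 for all n such that (ln a_n)_n is completely alternating, and let N ≥ 1 be an integer. Then the sequence b defined by b_n = a_n / a_{n+N} satisfies that (ln b_n)_n is completely alternating. -/
import Mathlib


/-- The `n`-th iterated forward difference of a sequence, evaluated at `k`. -/
noncomputable def fdiff (a : ℕ → ℝ) (n k : ℕ) : ℝ :=
  ∑ i ∈ Finset.range (n + 1), (-1 : ℝ) ^ i * (n.choose i : ℝ) * a (k + i)

/-- A sequence is completely alternating if all iterated forward differences of
order `n ≥ 1` are nonpositive. -/
def CompletelyAlternating (a : ℕ → ℝ) : Prop :=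
  ∀ n : ℕ, 1 ≤ n → ∀ k : ℕ, fdiff a n k ≤ 0

open fwdDiff in
lemma fdiff_eq_fwdDiff (a : ℕ → ℝ) (n k : ℕ) :
    fdiff a n k = (-1 : ℝ) ^ n * ((fwdDiff 1)^[n] a) k := by
  rw [fwdDiff_iter_eq_sum_shift, fdiff, Finset.mul_sum]
  refine Finset.sum_congr rfl fun i hi => ?_
  rw [Finset.mem_range, Nat.lt_succ_iff] at hi
  have hpow : (-1 : ℝ) ^ n * (-1 : ℝ) ^ i = (-1 : ℝ) ^ (n - i) := by
    rw [← pow_add, show n + i = (n - i) + 2 * i by omega, pow_add, pow_mul]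
    norm_num
  have h1 : i • (1 : ℕ) = i := by simp
  rw [h1, zsmul_eq_mul]
  push_cast
  have h2n : (-1 : ℝ) ^ n * (-1 : ℝ) ^ n = 1 := by
    rw [← pow_add]; exact Even.neg_one_pow ⟨n, rfl⟩
  linear_combination ((-1 : ℝ) ^ n * (n.choose i : ℝ) * a (k + i)) * hpow -
    ((-1 : ℝ) ^ i * (n.choose i : ℝ) * a (k + i)) * h2n

lemma fdiff_succ (a : ℕ → ℝ) (n k : ℕ) :
    fdiff a (n + 1) k = fdiff a n k - fdiff a n (k + 1) := by
  simp only [fdiff_eq_fwdDiff, Function.iterate_succ_apply', fwdDiff, pow_succ]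
  ring

lemma fdiff_sub (f g : ℕ → ℝ) (n k : ℕ) :
    fdiff (fun m => f m - g m) n k = fdiff f n k - fdiff g n k := by
  simp [fdiff, mul_sub, Finset.sum_sub_distrib]

lemma fdiff_shiftN (a : ℕ → ℝ) (N n k : ℕ) :
    fdiff (fun m => a (m + N)) n k = fdiff a n (k + N) := by
  simp [fdiff, add_right_comm, add_assoc, add_comm N]

theorem stmt3 (a : ℕ → ℝ) (ha : ∀ n, 0 < a n)
    (hCA : CompletelyAlternating (fun n => Real.log (a n)))
    (N : ℕ) (hN : 1 ≤ N) :
    CompletelyAlternating (fun n => Real.log (a n / a (n + N))) := by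
  intro n hn k
  have hlog : (fun m => Real.log (a m / a (m + N))) =
      fun m => Real.log (a m) - Real.log (a (m + N)) := by
    funext m
    exact Real.log_div (ha m).ne' (ha (m + N)).ne'
  rw [hlog]
  have := fdiff_sub (fun m => Real.log (a m)) (fun m => Real.log (a (m + N))) n k
  rw [this, fdiff_shiftN (fun m => Real.log (a m)) N n k]
  -- fdiff L n (k+j) is monotone in j since fdiff L n (k+1) = fdiff L n k - fdiff L (n+1) k
  have mono : ∀ j, fdiff (fun m => Real.log (a m)) n k ≤
      fdiff (fun m => Real.log (a m)) n (k + j) := by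
    intro j
    induction j with
    | zero => simp
    | succ j ih =>
      refine ih.trans ?_
      have h1 := fdiff_succ (fun m => Real.log (a m)) n (k + j)
      have h2 := hCA (n + 1) (by omega) (k + j)
      rw [← add_assoc]
      linarith [h1, h2]
  linarith [mono N]
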